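/- arXiv:1107.4345 — 3 statements merged into one kernel-verified Lean document; each statement's English description precedes it below -/
import Mathlib

section
/- Let A be an algebra (under pointwise addition and multiplication) of continuous complex-valued functions on the closed unit disk 𝔻̄ such that (i) for every f ∈ A and every z ∈ 𝔻, |f(z)| ≤ ‖f‖_𝕋, and (ii) A contains the disk algebra A(𝔻). Then A = A(𝔻). -/
open Complex Metric

/-- The sup of `|f|` over the unit circle `𝕋`. -/
noncomputable def circleSup (f : ℂ → ℂ) : ℝ :=
  ⨆ ζ : sphere (0:ℂ) 1, ‖f ζ‖

/-- The disk algebra `A(𝔻)`: functions continuous on the closed unit disk and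
holomorphic on the open unit disk. -/
def diskAlgebra : Set (ℂ → ℂ) :=
  {f | ContinuousOn f (closedBall 0 1) ∧ DifferentiableOn ℂ f (ball 0 1)}

/-!
For `a ∈ 𝔻`, the maximum principle makes `f ↦ f a` a functional of norm at most one on the
boundary values of `A`; extend it by Hahn–Banach to `Φ` on `C(𝕋)`. A unital functional of norm
one is real on real functions, so `Φ (ζ̄ ^ m) = ā ^ m` besides `Φ (ζ ^ m) = a ^ m`. Hence `Φ`
agrees with the Poisson integral at `a` on trigonometric polynomials, and by density everywhere.
At `a = 0` this is the mean value property, which applied to `ζ ^ (k + 1) f ∈ A` kills the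
negative Fourier coefficients of `f`; so on `𝔻` the function `f` is the power series
`∑ f̂(n) a ^ n`, and is holomorphic.
-/

noncomputable section

open AddCircle ComplexConjugate MeasureTheory
open scoped ENNReal

namespace ContinuousLinearMap

variable {X : Type*} [TopologicalSpace X] [CompactSpace X] {Φ : C(X, ℂ) →L[ℂ] ℂ}

theorem im_apply_eq_zero_of_norm_le_one (hΦ : ‖Φ‖ ≤ 1) (h1 : Φ 1 = 1) {v : C(X, ℂ)}
    (hv : ∀ x, (v x).im = 0) : (Φ v).im = 0 := by
  -- Compare `Φ (v + i t)` with `‖v + i t‖ ≤ √(‖v‖² + t²)` for large `|t|`.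
  have key (t : ℝ) : ((Φ v).im + t) ^ 2 ≤ ‖v‖ ^ 2 + t ^ 2 := by
    have hw : ‖v + (t * I) • 1‖ ≤ √(‖v‖ ^ 2 + t ^ 2) := by
      refine (ContinuousMap.norm_le _ (Real.sqrt_nonneg _)).2 fun x => ?_
      rw [Real.le_sqrt (norm_nonneg _) (by positivity), Complex.sq_norm]
      have hnormSq : normSq (v x + t * I) = ‖v x‖ ^ 2 + t ^ 2 := by
        rw [Complex.sq_norm, normSq_apply, normSq_apply]
        simp [hv x]
        ring
      simpa [hnormSq] using pow_le_pow_left₀ (norm_nonneg _) (v.norm_coe_le_norm x) 2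
    have him : (Φ (v + (t * I) • 1)).im = (Φ v).im + t := by simp [h1]
    have habs := calc |(Φ v).im + t| = |(Φ (v + (t * I) • 1)).im| := by rw [him]
      _ ≤ ‖Φ (v + (t * I) • 1)‖ := abs_im_le_norm _
      _ ≤ ‖v + (t * I) • 1‖ := Φ.le_of_opNorm_le hΦ _ |>.trans_eq (one_mul _)
      _ ≤ √(‖v‖ ^ 2 + t ^ 2) := hw
    have hsq := pow_le_pow_left₀ (abs_nonneg _) habs 2
    rwa [sq_abs, Real.sq_sqrt (by positivity)] at hsq
  by_contra hne
  nlinarith [key ((‖v‖ ^ 2 + 1) / (2 * (Φ v).im)),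
    mul_div_cancel₀ (‖v‖ ^ 2 + 1) (mul_ne_zero two_ne_zero hne)]

theorem map_star_of_norm_le_one (hΦ : ‖Φ‖ ≤ 1) (h1 : Φ 1 = 1) (v : C(X, ℂ)) :
    Φ (star v) = conj (Φ v) := by
  have hre : (Φ v + Φ (star v)).im = 0 := by
    rw [← map_add]
    exact im_apply_eq_zero_of_norm_le_one hΦ h1 fun x => by simp
  have him : (I * (Φ v - Φ (star v))).im = 0 := by
    rw [← map_sub, ← smul_eq_mul, ← map_smul]
    exact im_apply_eq_zero_of_norm_le_one hΦ h1 fun x => by simp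
  apply Complex.ext <;> simp at hre him ⊢ <;> linarith

end ContinuousLinearMap

theorem LinearMap.exists_dual_comp_eq_of_norm_le {𝕜 E F : Type*} [RCLike 𝕜]
    [AddCommGroup E] [Module 𝕜 E] [NormedAddCommGroup F] [NormedSpace 𝕜 F]
    (T : E →ₗ[𝕜] F) (φ : E →ₗ[𝕜] 𝕜) (h : ∀ x, ‖φ x‖ ≤ ‖T x‖) :
    ∃ ψ : StrongDual 𝕜 F, ‖ψ‖ ≤ 1 ∧ ∀ x, ψ (T x) = φ x := by
  have hker : LinearMap.ker T ≤ LinearMap.ker φ := fun x hx => by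
    simpa [LinearMap.mem_ker.1 hx] using h x
  let ψ₀ : LinearMap.range T →ₗ[𝕜] 𝕜 :=
    (LinearMap.ker T).liftQ φ hker ∘ₗ T.quotKerEquivRange.symm
  have hψ₀ (x : E) : ψ₀ ⟨T x, LinearMap.mem_range_self T x⟩ = φ x := by
    simp [ψ₀, LinearMap.quotKerEquivRange_symm_apply_image]
  have hbound (y : LinearMap.range T) : ‖ψ₀ y‖ ≤ 1 * ‖y‖ := by
    obtain ⟨_, x, rfl⟩ := y
    simpa [hψ₀] using h x
  obtain ⟨ψ, hψ, hnorm⟩ := exists_extension_norm_eq _ (ψ₀.mkContinuous 1 hbound)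
  refine ⟨ψ, hnorm ▸ LinearMap.mkContinuous_norm_le _ zero_le_one hbound, fun x => ?_⟩
  simpa [hψ₀] using hψ ⟨T x, LinearMap.mem_range_self T x⟩

theorem differentiableOn_tsum_mul_pow {c : ℕ → ℂ} {M : ℝ} (hc : ∀ n, ‖c n‖ ≤ M) :
    DifferentiableOn ℂ (fun z => ∑' n, c n * z ^ n) (ball 0 1) := by
  set p := FormalMultilinearSeries.ofScalars ℂ c
  have hr : (1 : ℝ≥0∞) ≤ p.radius := by
    simpa using p.le_radius_of_bound M (r := 1) fun n => by simpa [p] using hc n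
  have hball : ball (0:ℂ) 1 ⊆ eball 0 p.radius := by
    rw [← NNReal.coe_one, ← eball_coe, ENNReal.coe_one]
    exact eball_subset_eball hr
  have hp := (p.hasFPowerSeriesOnBall (zero_lt_one.trans_le hr)).differentiableOn
  exact (hp.mono hball).congr fun z _ => (FormalMultilinearSeries.ofScalars_sum_eq c z).symm

section Fourier

variable {T : ℝ} [Fact (0 < T)]

theorem norm_fourierCoeff_le (v : C(AddCircle T, ℂ)) (n : ℤ) :
    ‖fourierCoeff v n‖ ≤ ‖v‖ := by
  rw [fourierCoeff]
  refine (norm_integral_le_of_norm_le_const (C := ‖v‖) (.of_forall fun x => ?_)).trans_eq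
    (by simp)
  simpa [fourier_apply, Circle.norm_coe] using v.norm_coe_le_norm x

theorem fourierCoeff_fourier_mul (v : C(AddCircle T, ℂ)) (k n : ℤ) :
    fourierCoeff ⇑((fourier k : C(AddCircle T, ℂ)) * v) n = fourierCoeff v (n - k) := by
  simp only [fourierCoeff, ContinuousMap.mul_apply, smul_eq_mul, ← mul_assoc, ← fourier_add]
  ring_nf

def fourierCoeffCLM (n : ℤ) : C(AddCircle T, ℂ) →L[ℂ] ℂ :=
  LinearMap.mkContinuous
    { toFun := fun v => fourierCoeff v n
      map_add' := fun v w => by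
        rw [ContinuousMap.coe_add, fourierCoeff.add, Pi.add_apply] <;>
          exact (ContinuousMap.continuous _).integrable_of_hasCompactSupport
            (.of_compactSpace _)
      map_smul' := fun c v => fourierCoeff.const_smul v c n }
    1 fun v => (norm_fourierCoeff_le v n).trans_eq (one_mul _).symm

@[simp] theorem fourierCoeffCLM_apply (n : ℤ) (v : C(AddCircle T, ℂ)) :
    fourierCoeffCLM n v = fourierCoeff v n := rfl

theorem norm_fourierCoeffCLM_le (n : ℤ) :
    ‖(fourierCoeffCLM n : C(AddCircle T, ℂ) →L[ℂ] ℂ)‖ ≤ 1 :=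
  LinearMap.mkContinuous_norm_le _ zero_le_one _

def poissonWeight (a : ℂ) (n : ℤ) : ℂ := if 0 ≤ n then a ^ n.natAbs else conj a ^ n.natAbs

theorem poissonWeight_natCast (a : ℂ) (m : ℕ) : poissonWeight a m = a ^ m := by
  simp [poissonWeight]

theorem poissonWeight_neg_natCast (a : ℂ) (m : ℕ) : poissonWeight a (-m) = conj (a ^ m) := by
  rcases eq_or_ne m 0 with rfl | hm
  · simp [poissonWeight]
  · simp [poissonWeight, hm]

theorem poissonWeight_zero_left {n : ℤ} (hn : n ≠ 0) : poissonWeight 0 n = 0 := by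
  simp [poissonWeight, hn]

theorem norm_poissonWeight (a : ℂ) (n : ℤ) : ‖poissonWeight a n‖ = ‖a‖ ^ n.natAbs := by
  unfold poissonWeight; split_ifs <;> simp

theorem summable_norm_poissonWeight {a : ℂ} (ha : ‖a‖ < 1) :
    Summable fun n => ‖poissonWeight a n‖ := by
  have := summable_geometric_of_lt_one (norm_nonneg a) ha
  simp only [norm_poissonWeight]
  exact .of_nat_of_neg (by simpa using this) (by simpa using this)

/-- The Poisson integral at `a`: `poissonWeight a` are the Fourier coefficients of the Poisson
kernel at `a`. -/
def poissonFunctional (a : ℂ) : C(AddCircle T, ℂ) →L[ℂ] ℂ :=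
  ∑' n, poissonWeight a n • fourierCoeffCLM n

theorem poissonFunctional_apply {a : ℂ} (ha : ‖a‖ < 1) (v : C(AddCircle T, ℂ)) :
    poissonFunctional a v = ∑' n, poissonWeight a n * fourierCoeff v n := by
  have hsum : Summable fun n =>
      poissonWeight a n • (fourierCoeffCLM n : C(AddCircle T, ℂ) →L[ℂ] ℂ) :=
    .of_norm_bounded (summable_norm_poissonWeight ha) fun n => (norm_smul _ _).trans_le
      (mul_le_of_le_one_right (norm_nonneg _) (norm_fourierCoeffCLM_le n))
  simpa [poissonFunctional] using
    (hsum.hasSum.mapL (ContinuousLinearMap.apply ℂ ℂ v)).tsum_eq.symm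

theorem poissonFunctional_fourier {a : ℂ} (ha : ‖a‖ < 1) (m : ℤ) :
    poissonFunctional a (fourier m : C(AddCircle T, ℂ)) = poissonWeight a m := by
  rw [poissonFunctional_apply ha, fourierCoeff_fourier, tsum_eq_single m] <;> simp_all

theorem poissonFunctional_zero_apply (v : C(AddCircle T, ℂ)) :
    poissonFunctional 0 v = fourierCoeff v 0 := by
  rw [poissonFunctional_apply (by simp), tsum_eq_single 0 fun n hn => by
    rw [poissonWeight_zero_left hn, zero_mul]]
  simp [poissonWeight]

theorem poissonFunctional_apply_of_fourierCoeff_neg {a : ℂ} (ha : ‖a‖ < 1)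
    {v : C(AddCircle T, ℂ)} (hv : ∀ k : ℕ, fourierCoeff v (-(k + 1)) = 0) :
    poissonFunctional a v = ∑' n : ℕ, fourierCoeff v n * a ^ n := by
  set c := fun n => poissonWeight a n * fourierCoeff v n
  have hc : Summable c := by
    refine .of_norm_bounded ((summable_norm_poissonWeight ha).mul_right ‖v‖) fun n => ?_
    rw [norm_mul]
    exact mul_le_mul_of_nonneg_left (norm_fourierCoeff_le v n) (norm_nonneg _)
  have hneg : Function.Injective fun n : ℕ => -((n : ℤ) + 1) := fun m n h => by simpa using h
  rw [poissonFunctional_apply ha, tsum_of_nat_of_neg_add_one (f := c)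
    (hc.comp_injective Nat.cast_injective) (hc.comp_injective hneg)]
  simp only [c, hv, mul_zero, tsum_zero, add_zero, poissonWeight_natCast]
  exact tsum_congr fun n => mul_comm _ _

theorem eq_poissonFunctional {a : ℂ} (ha : ‖a‖ < 1) {Φ : C(AddCircle T, ℂ) →L[ℂ] ℂ}
    (hΦ : ‖Φ‖ ≤ 1) (hpow : ∀ m : ℕ, Φ (fourier m) = a ^ m) :
    Φ = poissonFunctional a := by
  have h1 : Φ 1 = 1 := by
    simpa [show (fourier 0 : C(AddCircle T, ℂ)) = 1 by ext; simp] using hpow 0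
  have hdense :
      Dense (Submodule.span ℂ (Set.range (fourier (T := T))) : Set C(AddCircle T, ℂ)) :=
    Submodule.dense_iff_topologicalClosure_eq_top.2 span_fourier_closure_eq_top
  refine ContinuousLinearMap.ext_on hdense ?_
  rintro _ ⟨n, rfl⟩
  rw [poissonFunctional_fourier ha]
  obtain ⟨m, rfl | rfl⟩ := Int.eq_nat_or_neg n
  · rw [hpow, poissonWeight_natCast]
  · have : (fourier (-m) : C(AddCircle T, ℂ)) = star (fourier m) := by ext; exact fourier_neg
    rw [this, Φ.map_star_of_norm_le_one hΦ h1, hpow, poissonWeight_neg_natCast]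

end Fourier

section BoundaryValues

variable {T : ℝ}

def circleRestrict (f : ℂ → ℂ) (hf : ContinuousOn f (sphere 0 1)) : C(AddCircle T, ℂ) :=
  ⟨fun x => f (toCircle x), hf.comp_continuous (by fun_prop) fun x => (toCircle x).2⟩

theorem circleRestrict_id_pow (m : ℕ) (hf : ContinuousOn (id ^ m : ℂ → ℂ) (sphere 0 1)) :
    circleRestrict (id ^ m) hf = (fourier m : C(AddCircle T, ℂ)) := by
  ext x
  simp [circleRestrict, fourier_apply, toCircle_nsmul]

theorem circleRestrict_mul {f g : ℂ → ℂ} (hf : ContinuousOn f (sphere 0 1))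
    (hg : ContinuousOn g (sphere 0 1)) (hfg : ContinuousOn (f * g) (sphere 0 1)) :
    circleRestrict (T := T) (f * g) hfg = circleRestrict f hf * circleRestrict g hg := rfl

theorem circleSup_le_norm_circleRestrict [Fact (0 < T)] (f : ℂ → ℂ)
    (hf : ContinuousOn f (sphere 0 1)) : circleSup f ≤ ‖circleRestrict (T := T) f hf‖ := by
  have : Nonempty (sphere (0:ℂ) 1) := ⟨⟨1, by simp⟩⟩
  refine ciSup_le fun ζ => ?_
  obtain ⟨x, hx⟩ := (homeomorphCircle (Fact.out : 0 < T).ne').surjective ⟨ζ, ζ.2⟩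
  rw [homeomorphCircle_apply] at hx
  simpa [circleRestrict, hx] using (circleRestrict f hf).norm_coe_le_norm x

end BoundaryValues

section MaximumPrinciple

variable {T : ℝ} [Fact (0 < T)] (A : Subalgebra ℂ (ℂ → ℂ))
  (hcont : ∀ f ∈ A, ContinuousOn f (sphere 0 1))
  (hmax : ∀ f ∈ A, ∀ z ∈ ball (0:ℂ) 1, ‖f z‖ ≤ circleSup f)
include hcont hmax

theorem exists_representing_functional {a : ℂ} (ha : a ∈ ball 0 1) :
    ∃ Φ : C(AddCircle T, ℂ) →L[ℂ] ℂ, ‖Φ‖ ≤ 1 ∧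
      ∀ f (hf : f ∈ A), Φ (circleRestrict f (hcont f hf)) = f a := by
  let R : A →ₗ[ℂ] C(AddCircle T, ℂ) :=
    { toFun := fun f => circleRestrict f (hcont _ f.2)
      map_add' := fun _ _ => rfl
      map_smul' := fun _ _ => rfl }
  let ev : A →ₗ[ℂ] ℂ :=
    { toFun := fun f => (f : ℂ → ℂ) a
      map_add' := fun _ _ => rfl
      map_smul' := fun _ _ => rfl }
  obtain ⟨Φ, hΦ, hΦR⟩ := R.exists_dual_comp_eq_of_norm_le ev fun f =>
    (hmax f f.2 a ha).trans (circleSup_le_norm_circleRestrict _ (hcont _ f.2))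
  exact ⟨Φ, hΦ, fun f hf => hΦR ⟨f, hf⟩⟩

theorem apply_eq_poissonFunctional (hid : id ∈ A) {f : ℂ → ℂ} (hf : f ∈ A) {a : ℂ}
    (ha : a ∈ ball 0 1) :
    f a = poissonFunctional a (circleRestrict (T := T) f (hcont f hf)) := by
  obtain ⟨Φ, hΦ, hΦA⟩ := exists_representing_functional A hcont hmax (T := T) ha
  rw [← hΦA f hf, eq_poissonFunctional (by simpa using ha) hΦ fun m => ?_]
  rw [← circleRestrict_id_pow m (hcont _ (pow_mem hid m)), hΦA _ (pow_mem hid m)]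
  rfl

theorem fourierCoeff_circleRestrict_neg_eq_zero (hid : id ∈ A) {f : ℂ → ℂ} (hf : f ∈ A)
    (k : ℕ) : fourierCoeff (circleRestrict (T := T) f (hcont f hf)) (-(k + 1)) = 0 := by
  have hmem : id ^ (k + 1) * f ∈ A := mul_mem (pow_mem hid _) hf
  have := apply_eq_poissonFunctional A hcont hmax (T := T) hid hmem (a := 0) (by simp)
  rw [poissonFunctional_zero_apply, circleRestrict_mul (hcont _ (pow_mem hid _)) (hcont f hf),
    circleRestrict_id_pow, fourierCoeff_fourier_mul] at this
  simpa using this.symm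

theorem differentiableOn_ball_of_mem (hid : id ∈ A) {f : ℂ → ℂ} (hf : f ∈ A) :
    DifferentiableOn ℂ f (ball 0 1) := by
  set v := circleRestrict (T := 1) f (hcont f hf)
  refine (differentiableOn_tsum_mul_pow fun n => norm_fourierCoeff_le v n).congr fun a ha => ?_
  rw [apply_eq_poissonFunctional A hcont hmax (T := 1) hid hf ha]
  exact poissonFunctional_apply_of_fourierCoeff_neg (by simpa using ha)
    (fourierCoeff_circleRestrict_neg_eq_zero A hcont hmax hid hf)

end MaximumPrinciple

end

theorem rudin_algebra_version_general (A : Set (ℂ → ℂ))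
    (hcont : ∀ f ∈ A, ContinuousOn f (closedBall (0:ℂ) 1))
    (hadd : ∀ f ∈ A, ∀ g ∈ A, f + g ∈ A)
    (hmul : ∀ f ∈ A, ∀ g ∈ A, f * g ∈ A)
    (hmax : ∀ f ∈ A, ∀ z ∈ ball (0:ℂ) 1, ‖f z‖ ≤ circleSup f)
    (hsub : diskAlgebra ⊆ A) :
    A = diskAlgebra := by
  let B : Subalgebra ℂ (ℂ → ℂ) :=
    { carrier := A
      mul_mem' := fun hf hg => hmul _ hf _ hg
      add_mem' := fun hf hg => hadd _ hf _ hg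
      algebraMap_mem' := fun c => hsub ⟨continuousOn_const, differentiableOn_const c⟩ }
  refine Set.Subset.antisymm (fun f hf => ⟨hcont f hf, ?_⟩) hsub
  exact differentiableOn_ball_of_mem B
    (fun f hf => (hcont f hf).mono sphere_subset_closedBall) hmax
    (hsub ⟨continuousOn_id, differentiableOn_id⟩) hf

/-- Rudin's theorem: an algebra of continuous functions on the closed disk satisfying the
weak maximum principle and containing the disk algebra equals the disk algebra. -/
theorem rudin_algebra_version (A : Set (ℂ → ℂ))
    (hcont : ∀ f ∈ A, ContinuousOn f (closedBall (0:ℂ) 1))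
    (hadd : ∀ f ∈ A, ∀ g ∈ A, f + g ∈ A)
    (hmul : ∀ f ∈ A, ∀ g ∈ A, f * g ∈ A)
    (hsmul : ∀ (c : ℂ), ∀ f ∈ A, c • f ∈ A)
    (hmax : ∀ f ∈ A, ∀ z ∈ ball (0:ℂ) 1, ‖f z‖ ≤ circleSup f)
    (hsub : diskAlgebra ⊆ A) :
    A = diskAlgebra :=
  rudin_algebra_version_general A hcont hadd hmul hmax hsub
end

section
/- Let φ be a continuous complex-valued function on 𝔻̄, and suppose that for every a, b ∈ A(𝔻) and every z ∈ 𝔻, |a(z) + b(z)φ(z)| ≤ ‖a + bφ‖_𝕋. Then φ ∈ A(𝔻), i.e., φ is holomorphic in 𝔻. -/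
open Complex Metric

/-!
Fix `z ∈ 𝔻` and let `ψ` be `φ` or `ζ ↦ ζ φ(ζ)`. By hypothesis, `a + c ψ ↦ a(z) + c ψ(z)`
(`a ∈ A(𝔻)`, `c ∈ ℂ`) is a functional of norm `≤ 1` on a subspace of `C(𝕋)`, so Hahn–Banach
extends it to some `ℓ` with `‖ℓ‖ ≤ 1` and `ℓ 1 = 1`. Such an `ℓ` commutes with conjugation, hence
agrees with the Poisson integral at `z` on every `ζ^m ζ̄^n`, and by Stone–Weierstrass everywhere:
`φ(z) = P[φ](z)` and `z φ(z) = P[ζ φ](z)`. On `𝕋` the Poisson kernel satisfies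
`P_z(ζ) (ζ - z) = (1 - |z|²) ζ / (1 - z̄ ζ)`, so the second identity minus `z` times the first
says that the antiholomorphic part `∫ ζ φ(ζ) / (1 - z̄ ζ)` of `P[φ]` vanishes. What is left of
`P[φ]` is the Herglotz integral of `φ`, which is holomorphic in `z`.
-/

open ComplexStarModule ComplexConjugate Real

local notation "𝕋" => sphere (0 : ℂ) 1

section CStarRing

variable {A : Type*} [NormedRing A] [StarRing A] [CStarRing A] [NormedAlgebra ℂ A]
  [StarModule ℂ A]

theorem ContinuousLinearMap.im_apply_eq_zero_of_isSelfAdjoint {ℓ : A →L[ℂ] ℂ} (hℓ : ‖ℓ‖ ≤ 1)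
    (h1 : ℓ 1 = 1) {a : A} (ha : IsSelfAdjoint a) : (ℓ a).im = 0 := by
  nontriviality A using Subsingleton.elim a 0, map_zero, zero_im
  set s := (ℓ a).im
  -- The C⋆-identity gives `‖a + t I‖² = ‖a² + t²‖ ≤ ‖a‖² + t²`, which for large `|t|` is
  -- incompatible with `|ℓ a + t I| ≥ |s + t|` unless `s = 0`.
  have key (t : ℝ) : (s + t) ^ 2 ≤ ‖a‖ ^ 2 + t ^ 2 := by
    set b := a + ((t : ℂ) * I) • (1 : A)
    have hb : star b * b = a * a + ((t : ℂ) ^ 2) • (1 : A) := by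
      simp only [b, star_add, star_smul, ha.star_eq, star_one, Complex.star_def, map_mul,
        conj_ofReal, conj_I, add_mul, mul_add, smul_mul_assoc, mul_smul_comm, one_mul, mul_one]
      match_scalars
      · ring
      · ring
      · linear_combination (-(t : ℂ) ^ 2) * I_sq
    have hℓb : ℓ b = ℓ a + (t : ℂ) * I := by simp [b, h1]
    calc (s + t) ^ 2 = (ℓ b).im ^ 2 := by simp [hℓb, s]
      _ ≤ ‖ℓ b‖ ^ 2 := by rw [← sq_abs]; gcongr; exact abs_im_le_norm _
      _ ≤ ‖b‖ ^ 2 := by gcongr; exact ℓ.le_of_opNorm_le hℓ b |>.trans_eq (one_mul _)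
      _ = ‖a * a + ((t : ℂ) ^ 2) • (1 : A)‖ := by rw [← hb, CStarRing.norm_star_mul_self, sq]
      _ ≤ ‖a‖ ^ 2 + t ^ 2 := by
        grw [norm_add_le, norm_smul, norm_mul_le, norm_one]
        simp [sq]
  by_contra hs
  nlinarith [key (‖a‖ ^ 2 / s), mul_div_cancel₀ (‖a‖ ^ 2) hs, sq_pos_of_ne_zero hs]

theorem ContinuousLinearMap.map_star_of_norm_le_one_s2 {ℓ : A →L[ℂ] ℂ} (hℓ : ‖ℓ‖ ≤ 1)
    (h1 : ℓ 1 = 1) (a : A) : ℓ (star a) = star (ℓ a) := by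
  have hre := ℓ.im_apply_eq_zero_of_isSelfAdjoint hℓ h1 (ℜ a).2
  have him := ℓ.im_apply_eq_zero_of_isSelfAdjoint hℓ h1 (ℑ a).2
  rw [← realPart_add_I_smul_imaginaryPart a]
  simp only [star_add, star_smul, (ℜ a).2.star_eq, (ℑ a).2.star_eq, map_add, map_smul]
  apply Complex.ext <;> simp [hre, him]

end CStarRing

theorem LinearMap.exists_strongDual_norm_le_one_comp_eq {𝕜 V F : Type*} [NontriviallyNormedField 𝕜]
    [IsRCLikeNormedField 𝕜] [AddCommGroup V] [Module 𝕜 V] [SeminormedAddCommGroup F]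
    [NormedSpace 𝕜 F] (T : V →ₗ[𝕜] F) (S : V →ₗ[𝕜] 𝕜) (hST : ∀ v, ‖S v‖ ≤ ‖T v‖) :
    ∃ ℓ : StrongDual 𝕜 F, ‖ℓ‖ ≤ 1 ∧ ∀ v, ℓ (T v) = S v := by
  obtain ⟨g, hg⟩ := T.rangeRestrict.exists_rightInverse_of_surjective T.range_rangeRestrict
  have hTg (y : range T) : T (g y) = y := congrArg Subtype.val (LinearMap.congr_fun hg y)
  have hSg (v : V) : S (g ⟨T v, mem_range_self T v⟩) = S v := by
    rw [← sub_eq_zero, ← norm_le_zero_iff, ← map_sub]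
    simpa [hTg] using hST (g ⟨T v, mem_range_self T v⟩ - v)
  let Λ : StrongDual 𝕜 (range T) :=
    (S ∘ₗ g).mkContinuous 1 fun y => by simpa [hTg] using hST (g y)
  obtain ⟨ℓ, hℓΛ, hℓ⟩ := exists_extension_norm_eq (range T) Λ
  refine ⟨ℓ, hℓ ▸ (S ∘ₗ g).mkContinuous_norm_le zero_le_one _, fun v => ?_⟩
  rw [← hSg]
  exact hℓΛ ⟨T v, mem_range_self T v⟩

lemma ContinuousMap.restrict_id_mul_star_sphere :
    ContinuousMap.restrict 𝕋 (.id ℂ) * star (ContinuousMap.restrict 𝕋 (.id ℂ)) = 1 := by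
  ext x
  simp [Complex.mul_conj', mem_sphere_zero_iff_norm.1 x.2]

lemma ContinuousMap.dense_span_closure_restrict_id_star {𝕜 : Type*} [RCLike 𝕜] (s : Set 𝕜)
    [CompactSpace s] :
    Dense (Submodule.span 𝕜 (Submonoid.closure
      {ContinuousMap.restrict s (.id 𝕜), star (ContinuousMap.restrict s (.id 𝕜))} :
        Set C(s, 𝕜)) : Set C(s, 𝕜)) := by
  have h := ContinuousMap.elemental_id_eq_top s
  rw [StarAlgebra.elemental, ← SetLike.coe_set_eq, StarSubalgebra.topologicalClosure_coe] at h
  rw [← Algebra.adjoin_eq_span, ← Set.singleton_union, ← Set.star_singleton,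
    ← StarAlgebra.adjoin_toSubalgebra, dense_iff_closure_eq]
  exact h

theorem ContinuousLinearMap.ext_sphere_of_map_star {ℓ₁ ℓ₂ : C(𝕋, ℂ) →L[ℂ] ℂ}
    (h₁ : ∀ u, ℓ₁ (star u) = star (ℓ₁ u)) (h₂ : ∀ u, ℓ₂ (star u) = star (ℓ₂ u))
    (h : ∀ n : ℕ, ℓ₁ (ContinuousMap.restrict 𝕋 (.id ℂ) ^ n) =
      ℓ₂ (ContinuousMap.restrict 𝕋 (.id ℂ) ^ n)) : ℓ₁ = ℓ₂ := by
  refine ext_on (ContinuousMap.dense_span_closure_restrict_id_star 𝕋) ?_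
  rintro _ hu
  obtain ⟨m, n, rfl⟩ := (Submonoid.mem_closure_pair _ _ _).1 hu
  have hζ := ContinuousMap.restrict_id_mul_star_sphere
  rcases le_total n m with hnm | hmn
  · obtain ⟨k, rfl⟩ := Nat.exists_eq_add_of_le hnm
    rw [pow_add, mul_right_comm, ← mul_pow, hζ, one_pow, one_mul]
    exact h k
  · obtain ⟨k, rfl⟩ := Nat.exists_eq_add_of_le hmn
    rw [pow_add, ← mul_assoc, ← mul_pow, hζ, one_pow, one_mul, ← star_pow, h₁, h₂, h]

@[simps]
def sphereRestrict (f : ℂ → ℂ) (hf : ContinuousOn f 𝕋) : C(𝕋, ℂ) :=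
  ⟨Set.domRestrict 𝕋 f, hf.domRestrict⟩

noncomputable def circleMapSphere : C(ℝ, 𝕋) :=
  ⟨fun θ => ⟨circleMap 0 1 θ, circleMap_mem_sphere 0 zero_le_one θ⟩, by fun_prop⟩

lemma intervalIntegrable_comp_circleMapSphere (u : C(𝕋, ℂ)) :
    IntervalIntegrable (fun θ => u (circleMapSphere θ)) MeasureTheory.volume 0 (2 * π) :=
  (u.continuous.comp circleMapSphere.continuous).intervalIntegrable _ _

noncomputable def sphereAverage : C(𝕋, ℂ) →L[ℂ] ℂ :=
  LinearMap.mkContinuous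
    { toFun u := (2 * π)⁻¹ • ∫ θ in 0..2 * π, u (circleMapSphere θ)
      map_add' u v := by
        rw [← smul_add, ← intervalIntegral.integral_add (intervalIntegrable_comp_circleMapSphere u)
          (intervalIntegrable_comp_circleMapSphere v)]
        rfl
      map_smul' c u := by
        simp only [ContinuousMap.smul_apply, intervalIntegral.integral_smul, RingHom.id_apply]
        rw [smul_comm] }
    1 fun u => by
      have h2π : 0 < 2 * π := by positivity
      calc ‖(2 * π)⁻¹ • ∫ θ in 0..2 * π, u (circleMapSphere θ)‖
          ≤ (2 * π)⁻¹ * (‖u‖ * |2 * π - 0|) := by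
            rw [norm_smul, Real.norm_of_nonneg (inv_nonneg.2 h2π.le)]
            gcongr
            exact intervalIntegral.norm_integral_le_of_norm_le_const fun θ _ =>
              u.norm_coe_le_norm _
        _ = 1 * ‖u‖ := by rw [sub_zero, abs_of_pos h2π]; field_simp

lemma sphereAverage_sphereRestrict {f : ℂ → ℂ} (hf : ContinuousOn f 𝕋) :
    sphereAverage (sphereRestrict f hf) = circleAverage f 0 1 := by
  rw [circleAverage_def]
  rfl

lemma sphereAverage_star (u : C(𝕋, ℂ)) : sphereAverage (star u) = star (sphereAverage u) := by
  have := (conjCLE : ℂ →L[ℝ] ℂ).intervalIntegral_comp_comm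
    (intervalIntegrable_comp_circleMapSphere u)
  simp only [ContinuousLinearEquiv.coe_coe, conjCLE_apply] at this
  change (2 * π)⁻¹ • ∫ θ in 0..2 * π, star (u (circleMapSphere θ)) = star ((2 * π)⁻¹ • _)
  rw [star_smul, star_trivial]
  exact congrArg _ this

lemma continuousOn_poissonKernel_sphere {z : ℂ} (hz : z ∈ ball 0 1) :
    ContinuousOn (poissonKernel 0 z) 𝕋 := by
  have := continuousOn_herglotzRieszKernel_sphere (R := 1) hz
  rw [abs_one] at this
  rw [poissonKernel_eq_re_herglotzRieszKernel]
  exact continuous_re.comp_continuousOn this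

noncomputable def poissonKernelSphere (z : ℂ) (hz : z ∈ ball 0 1) : C(𝕋, ℂ) :=
  sphereRestrict (fun ζ => (poissonKernel 0 z ζ : ℂ))
    (continuous_ofReal.comp_continuousOn (continuousOn_poissonKernel_sphere hz))

noncomputable def poissonIntegralCLM (z : ℂ) (hz : z ∈ ball 0 1) : C(𝕋, ℂ) →L[ℂ] ℂ :=
  sphereAverage ∘L ContinuousLinearMap.mul ℂ C(𝕋, ℂ) (poissonKernelSphere z hz)

lemma poissonIntegralCLM_apply {z : ℂ} (hz : z ∈ ball 0 1) (u : C(𝕋, ℂ)) :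
    poissonIntegralCLM z hz u = sphereAverage (poissonKernelSphere z hz * u) := rfl

lemma poissonIntegralCLM_sphereRestrict {z : ℂ} (hz : z ∈ ball 0 1) {f : ℂ → ℂ}
    (hf : ContinuousOn f 𝕋) :
    poissonIntegralCLM z hz (sphereRestrict f hf) = circleAverage (poissonKernel 0 z • f) 0 1 := by
  rw [← sphereAverage_sphereRestrict ((continuousOn_poissonKernel_sphere hz).smul hf),
    poissonIntegralCLM_apply]
  rfl

lemma poissonIntegralCLM_star {z : ℂ} (hz : z ∈ ball 0 1) (u : C(𝕋, ℂ)) :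
    poissonIntegralCLM z hz (star u) = star (poissonIntegralCLM z hz u) := by
  have hreal : star (poissonKernelSphere z hz) = poissonKernelSphere z hz := by
    ext ζ
    simp [poissonKernelSphere]
  rw [poissonIntegralCLM_apply, poissonIntegralCLM_apply, ← sphereAverage_star, star_mul, hreal,
    mul_comm]

lemma poissonIntegralCLM_pow {z : ℂ} (hz : z ∈ ball 0 1) (n : ℕ) :
    poissonIntegralCLM z hz (ContinuousMap.restrict 𝕋 (.id ℂ) ^ n) = z ^ n := by
  have : ContinuousMap.restrict 𝕋 (.id ℂ) ^ n = sphereRestrict (· ^ n) (by fun_prop) := by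
    ext ζ
    simp
  rw [this, poissonIntegralCLM_sphereRestrict,
    (differentiable_pow n).diffContOnCl.circleAverage_poissonKernel_smul hz]

lemma mem_diskAlgebra_of_differentiable {f : ℂ → ℂ} (hf : Differentiable ℂ f) :
    f ∈ diskAlgebra :=
  ⟨hf.continuous.continuousOn, hf.differentiableOn⟩

def diskAlgebraSubmodule : Submodule ℂ (ℂ → ℂ) where
  carrier := diskAlgebra
  add_mem' ha hb := ⟨ha.1.add hb.1, ha.2.add hb.2⟩
  zero_mem' := mem_diskAlgebra_of_differentiable (differentiable_const 0)
  smul_mem' c _ ha := ⟨ha.1.const_smul c, ha.2.const_smul c⟩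

lemma circleSup_eq_norm_sphereRestrict {f : ℂ → ℂ} (hf : ContinuousOn f 𝕋) :
    circleSup f = ‖sphereRestrict f hf‖ := by
  rw [ContinuousMap.norm_eq_iSup_norm]
  rfl

theorem eq_circleAverage_poissonKernel_smul_of_norm_le_circleSup {ψ : ℂ → ℂ}
    (hψ : ContinuousOn ψ 𝕋) {z : ℂ} (hz : z ∈ ball 0 1)
    (hmax : ∀ a ∈ diskAlgebra, ∀ c : ℂ, ‖a z + c * ψ z‖ ≤ circleSup fun ζ => a ζ + c * ψ ζ) :
    ψ z = circleAverage (poissonKernel 0 z • ψ) 0 1 := by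
  have hres (a : diskAlgebraSubmodule) : ContinuousOn (a : ℂ → ℂ) 𝕋 :=
    a.2.1.mono sphere_subset_closedBall
  let T : diskAlgebraSubmodule × ℂ →ₗ[ℂ] C(𝕋, ℂ) :=
    { toFun p := sphereRestrict p.1 (hres p.1) + p.2 • sphereRestrict ψ hψ
      map_add' p q := by ext; simp; ring
      map_smul' c p := by ext; simp; ring }
  let S : diskAlgebraSubmodule × ℂ →ₗ[ℂ] ℂ :=
    { toFun p := (p.1 : ℂ → ℂ) z + p.2 * ψ z
      map_add' p q := by simp; ring
      map_smul' c p := by simp; ring }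
  obtain ⟨ℓ, hℓ, hℓT⟩ := T.exists_strongDual_norm_le_one_comp_eq S fun p =>
    (hmax p.1 p.1.2 p.2).trans_eq
      (circleSup_eq_norm_sphereRestrict ((hres p.1).add (continuousOn_const.mul hψ)))
  have hℓpow (n : ℕ) : ℓ (ContinuousMap.restrict 𝕋 (.id ℂ) ^ n) = z ^ n := by
    convert hℓT (⟨(· ^ n), mem_diskAlgebra_of_differentiable (differentiable_pow n)⟩, 0) using 2
    · ext; simp [T]
    · simp [S]
  have hℓP : ℓ = poissonIntegralCLM z hz :=
    ContinuousLinearMap.ext_sphere_of_map_star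
      (ℓ.map_star_of_norm_le_one_s2 hℓ (by simpa using hℓpow 0)) (poissonIntegralCLM_star hz)
      fun n => by rw [hℓpow, poissonIntegralCLM_pow]
  calc ψ z = S (0, 1) := by simp [S]
    _ = ℓ (T (0, 1)) := (hℓT _).symm
    _ = ℓ (sphereRestrict ψ hψ) := by congr 1; ext; simp [T]
    _ = circleAverage (poissonKernel 0 z • ψ) 0 1 := by
      rw [hℓP, poissonIntegralCLM_sphereRestrict]

lemma ofReal_poissonKernel_zero_eq {z ζ : ℂ} (hζ : ζ ∈ 𝕋) :
    (poissonKernel 0 z ζ : ℂ) = (1 - z * conj z) * ζ / ((ζ - z) * (1 - conj z * ζ)) := by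
  have hζ1 : ‖ζ‖ = 1 := mem_sphere_zero_iff_norm.1 hζ
  have hζ0 : ζ ≠ 0 := ne_zero_of_mem_unit_sphere ⟨ζ, hζ⟩
  have hconj : conj ζ * ζ = 1 := by rw [mul_comm, mul_conj', hζ1]; simp
  have hden : (ζ - z) * (1 - conj z * ζ) = (ζ - z) * conj (ζ - z) * ζ := by
    rw [map_sub]
    linear_combination (z - ζ) * hconj
  rw [hden, mul_conj', mul_conj', mul_div_mul_right _ _ hζ0, poissonKernel_def]
  simp [hζ1]

theorem eq_circleAverage_herglotzRieszKernel_smul_of_poisson {φ : ℂ → ℂ}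
    (hφ : ContinuousOn φ 𝕋) {z : ℂ} (hz : z ∈ ball 0 1)
    (h₀ : φ z = circleAverage (poissonKernel 0 z • φ) 0 1)
    (h₁ : z * φ z = circleAverage (poissonKernel 0 z • fun ζ => ζ * φ ζ) 0 1) :
    φ z = (circleAverage (fun ζ => herglotzRieszKernel 0 z ζ • φ ζ) 0 1 +
      circleAverage φ 0 1) / 2 := by
  have hz1 : ‖z‖ < 1 := mem_ball_zero_iff.1 hz
  have hne (ζ : ℂ) (hζ : ζ ∈ 𝕋) : ζ - z ≠ 0 ∧ 1 - conj z * ζ ≠ 0 := by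
    have hζ1 := mem_sphere_zero_iff_norm.1 hζ
    exact ⟨sub_ne_zero.2 (ne_of_apply_ne norm (by rw [hζ1]; exact hz1.ne')),
      sub_ne_zero.2 (ne_of_apply_ne norm (by simp [hζ1, hz1.ne']))⟩
  -- the antiholomorphic part of the Poisson integral of `φ`
  let g ζ := ζ / (1 - conj z * ζ) * φ ζ
  have hP := continuousOn_poissonKernel_sphere hz
  have hH : ContinuousOn (herglotzRieszKernel 0 z) 𝕋 := by
    simpa using continuousOn_herglotzRieszKernel_sphere (R := 1) hz
  have hg : ContinuousOn g 𝕋 :=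
    (continuousOn_id.div (by fun_prop) fun ζ hζ => (hne ζ hζ).2).mul hφ
  have hint {f : ℂ → ℂ} (hf : ContinuousOn f 𝕋) : CircleIntegrable f 0 1 :=
    hf.circleIntegrable zero_le_one
  have hg0 : circleAverage g 0 1 = 0 := by
    have : ((1 - ‖z‖ ^ 2 : ℝ) : ℂ) * circleAverage g 0 1 = 0 := calc
      _ = circleAverage (fun ζ => (1 - ‖z‖ ^ 2) • g ζ) 0 1 := circleAverage_fun_smul.symm
      _ = circleAverage (fun ζ => (poissonKernel 0 z • fun ζ => ζ * φ ζ) ζ -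
            z • (poissonKernel 0 z • φ) ζ) 0 1 := by
        refine circleAverage_congr_sphere fun ζ hζ => ?_
        rw [abs_one] at hζ
        simp only [Pi.smul_apply', real_smul, smul_eq_mul, ofReal_poissonKernel_zero_eq hζ, g]
        field_simp [(hne ζ hζ).1, (hne ζ hζ).2]
        push_cast
        rw [← mul_conj']
        ring
      _ = 0 := by
        rw [circleAverage_fun_sub, circleAverage_fun_smul, ← h₀, ← h₁, smul_eq_mul, sub_self]
        · exact hint (hP.smul (continuousOn_id.mul hφ))
        · exact (hint (hP.smul hφ)).const_smul
    refine (mul_eq_zero.1 this).resolve_left (ofReal_ne_zero.2 ?_)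
    exact (sub_pos.2 (pow_lt_one₀ (norm_nonneg z) hz1 two_ne_zero)).ne'
  calc φ z
      _ = circleAverage (fun ζ => (2⁻¹ : ℂ) • (herglotzRieszKernel 0 z ζ • φ ζ + φ ζ) +
          conj z • g ζ) 0 1 := by
        rw [h₀]
        refine circleAverage_congr_sphere fun ζ hζ => ?_
        rw [abs_one] at hζ
        simp only [Pi.smul_apply', real_smul, smul_eq_mul, ofReal_poissonKernel_zero_eq hζ, g,
          herglotzRieszKernel_def, sub_zero]
        field_simp [(hne ζ hζ).1, (hne ζ hζ).2]
        ring
      _ = _ := by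
        rw [circleAverage_fun_add, circleAverage_fun_smul, circleAverage_fun_add,
          circleAverage_fun_smul, hg0, smul_zero, add_zero, smul_eq_mul, inv_mul_eq_div]
        all_goals apply hint; fun_prop

/-- Module formulation of Rudin's theorem: if `φ ∈ C(𝔻̄)` and every `a + bφ` with
`a, b ∈ A(𝔻)` satisfies the weak maximum principle, then `φ ∈ A(𝔻)`. -/
theorem module_max_principle (φ : ℂ → ℂ)
    (hφ : ContinuousOn φ (closedBall (0:ℂ) 1))
    (h : ∀ a ∈ diskAlgebra, ∀ b ∈ diskAlgebra, ∀ z ∈ ball (0:ℂ) 1,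
      ‖a z + b z * φ z‖ ≤ circleSup (fun ζ => a ζ + b ζ * φ ζ)) :
    φ ∈ diskAlgebra := by
  have hφ𝕋 : ContinuousOn φ 𝕋 := hφ.mono sphere_subset_closedBall
  have hrep {z : ℂ} (hz : z ∈ ball 0 1) :=
    eq_circleAverage_poissonKernel_smul_of_norm_le_circleSup hφ𝕋 hz fun a ha c =>
      h a ha _ (mem_diskAlgebra_of_differentiable (differentiable_const c)) z hz
  have hrep₁ {z : ℂ} (hz : z ∈ ball 0 1) :=
    eq_circleAverage_poissonKernel_smul_of_norm_le_circleSup (ψ := fun ζ => ζ * φ ζ)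
      (continuousOn_id.mul hφ𝕋) hz
      fun a ha c => by
        simpa only [mul_assoc] using
          h a ha (c * ·) (mem_diskAlgebra_of_differentiable (by fun_prop)) z hz
  refine ⟨hφ, DifferentiableOn.congr ?_ fun z hz =>
    eq_circleAverage_herglotzRieszKernel_smul_of_poisson hφ𝕋 hz (hrep hz) (hrep₁ hz)⟩
  exact ((differentiableOn_circleAverage_herglotzRieszKernel_smul
    (hφ𝕋.circleIntegrable zero_le_one)).add_const _).div_const 2
end

section
/- (Wermer) Let φ be continuous on 𝔻* ∪ 𝕋 and meromorphic in 𝔻, i.e., φ is holomorphic on 𝔻* and there exists m ∈ ℕ such that z ↦ z^m φ(z) extends holomorphically across 0. Then Σ is contained in the projective hull of γ: for every z ∈ 𝔻* there exists a constant C_z ≥ 1 such that |p(z, φ(z))| ≤ C_z^{deg p} · sup_{γ} |p| for every polynomial p ∈ ℂ[z, w]. -/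
/-!
For a polynomial `p` of total degree `d`, write `z ^ m φ z = g z` with `g` holomorphic on `𝔻`.
Then `z ^ (m d) p(z, φ z)` is a polynomial in `z` and `g z`, so it extends holomorphically across
`0` and continuously to the closed disc. The maximum modulus principle bounds it on `𝔻` by its
maximum on `𝕋`, where `|z ^ (m d)| = 1`; dividing by `|z| ^ (m d)` gives the estimate with
`C_z = |z| ^ (-m)`.
-/

open Complex Metric
open Set Filter Topology

/-- Evaluation of a polynomial in two variables at a point of `ℂ²`. -/
noncomputable def evalP (p : MvPolynomial (Fin 2) ℂ) (q : ℂ × ℂ) : ℂ :=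
  MvPolynomial.eval ![q.1, q.2] p

/-- The sup of `|p|` over the graph `γ = {(ζ, φ(ζ)) : ζ ∈ 𝕋}`. -/
noncomputable def gammaSup (φ : ℂ → ℂ) (p : MvPolynomial (Fin 2) ℂ) : ℝ :=
  ⨆ ζ : sphere (0:ℂ) 1, ‖evalP p (ζ, φ ζ)‖

theorem ball_diff_center_union_sphere {X : Type*} [PseudoMetricSpace X] {c : X} {r : ℝ}
    (hr : r ≠ 0) :
    ball c r \ {c} ∪ sphere c r = closedBall c r \ {c} := by
  rw [← ball_union_sphere, union_sdiff_distrib,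
    sdiff_singleton_eq_self (show c ∉ sphere c r by simpa [eq_comm] using hr)]

theorem norm_le_of_eqOn_ball_diff_center {V E : Type*} [NormedAddCommGroup V] [NormedSpace ℂ V]
    [Nontrivial V] [NormedAddCommGroup E] [NormedSpace ℂ E] {h G : V → E} {c : V} {r M : ℝ}
    (hh : ContinuousOn h (ball c r \ {c} ∪ sphere c r))
    (hG : DifferentiableOn ℂ G (ball c r)) (hhG : EqOn h G (ball c r \ {c}))
    (hM : ∀ ζ ∈ sphere c r, ‖h ζ‖ ≤ M) {z : V} (hz : z ∈ ball c r \ {c}) :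
    ‖h z‖ ≤ M := by
  classical
  have hr : r ≠ 0 := (pos_of_mem_ball hz.1).ne'
  -- filling in `G c` at the centre gives a function holomorphic on the ball and continuous on
  -- its closure
  set F := Function.update h c (G c) with hF
  have hFG : EqOn F G (ball c r) := fun w hw => by
    rcases eq_or_ne w c with rfl | hwc
    · exact Function.update_self w (G w) h
    · exact (Function.update_of_ne hwc ..).trans (hhG ⟨hw, hwc⟩)
  have hFc : ContinuousOn F (closedBall c r) := by
    intro x hx
    rw [← ball_union_sphere] at hx
    rcases hx with hxb | hxs
    · have hball : ball c r ∈ 𝓝 x := isOpen_ball.mem_nhds hxb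
      exact ((hG.continuousOn.continuousAt hball).congr
        (eventuallyEq_of_mem hball hFG).symm).continuousWithinAt
    · have hxc : x ≠ c := ne_of_mem_sphere hxs hr
      have hFh : F =ᶠ[𝓝 x] h := by
        filter_upwards [isOpen_compl_singleton.mem_nhds hxc] with w hw
        exact Function.update_of_ne hw ..
      have hnhds : ball c r \ {c} ∪ sphere c r ∈ 𝓝[closedBall c r] x := by
        rw [ball_diff_center_union_sphere hr]
        exact inter_mem_nhdsWithin _ (isOpen_compl_singleton.mem_nhds hxc)
      exact ((hh x (Or.inr hxs)).mono_of_mem_nhdsWithin hnhds).congr_of_eventuallyEq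
        (nhdsWithin_le_nhds hFh) hFh.eq_of_nhds
  have hdc : DiffContOnCl ℂ F (ball c r) :=
    ⟨hG.congr hFG, by rwa [closure_ball c hr]⟩
  have hbound : ∀ ζ ∈ frontier (ball c r), ‖F ζ‖ ≤ M := by
    rw [frontier_ball c hr]
    intro ζ hζ
    rw [hF, Function.update_of_ne (ne_of_mem_sphere hζ hr)]
    exact hM ζ hζ
  have hmax :=
    norm_le_of_forall_mem_frontier_norm_le isBounded_ball hdc hbound (subset_closure hz.1)
  rwa [hF, Function.update_of_ne hz.2] at hmax

theorem continuous_evalP (p : MvPolynomial (Fin 2) ℂ) : Continuous (evalP p) :=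
  (MvPolynomial.continuous_eval p).comp (by fun_prop)

theorem evalP_eq_sum (p : MvPolynomial (Fin 2) ℂ) (z w : ℂ) :
    evalP p (z, w) = ∑ s ∈ p.support, MvPolynomial.coeff s p * z ^ s 0 * w ^ s 1 := by
  simp only [evalP, MvPolynomial.eval_eq', Fin.prod_univ_two, Matrix.cons_val_zero,
    Matrix.cons_val_one, mul_assoc]

theorem pow_mul_evalP_eq_sum (p : MvPolynomial (Fin 2) ℂ) {d : ℕ} (hd : p.totalDegree ≤ d)
    (m : ℕ) (z w : ℂ) :
    z ^ (m * d) * evalP p (z, w) = ∑ s ∈ p.support,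
      MvPolynomial.coeff s p * z ^ (s 0 + m * (d - s 1)) * (z ^ m * w) ^ s 1 := by
  rw [evalP_eq_sum, Finset.mul_sum]
  refine Finset.sum_congr rfl fun s hs => ?_
  obtain ⟨k, rfl⟩ : ∃ k, d = s 1 + k := Nat.exists_eq_add_of_le <|
    (MvPolynomial.monomial_le_degreeOf 1 hs).trans <|
      (MvPolynomial.degreeOf_le_totalDegree p 1).trans hd
  rw [Nat.add_sub_cancel_left]
  ring

theorem norm_evalP_le_gammaSup {φ : ℂ → ℂ} (hφ : ContinuousOn φ (sphere 0 1))
    (p : MvPolynomial (Fin 2) ℂ) {ζ : ℂ} (hζ : ζ ∈ sphere 0 1) :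
    ‖evalP p (ζ, φ ζ)‖ ≤ gammaSup φ p := by
  have hc : Continuous fun ζ : sphere (0:ℂ) 1 => ‖evalP p (ζ, φ ζ)‖ :=
    continuous_norm.comp <| (continuous_evalP p).comp <|
      continuous_subtype_val.prodMk hφ.domRestrict
  exact le_ciSup (isCompact_range hc).bddAbove ⟨ζ, hζ⟩

theorem graph_in_projective_hull_general (φ : ℂ → ℂ)
    (hcont : ContinuousOn φ ((ball (0:ℂ) 1 \ {0}) ∪ sphere (0:ℂ) 1))
    (hmero : ∃ (m : ℕ) (g : ℂ → ℂ), DifferentiableOn ℂ g (ball (0:ℂ) 1) ∧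
      ∀ z ∈ ball (0:ℂ) 1 \ {0}, g z = z ^ m * φ z) :
    ∀ z ∈ ball (0:ℂ) 1 \ {0}, ∃ C : ℝ, 1 ≤ C ∧
      ∀ p : MvPolynomial (Fin 2) ℂ,
        ‖evalP p (z, φ z)‖ ≤ C ^ p.totalDegree * gammaSup φ p := by
  obtain ⟨m, g, hg, hgφ⟩ := hmero
  intro z hz
  have hz0 : 0 < ‖z‖ := norm_pos_iff.2 hz.2
  have hz1 : ‖z‖ < 1 := mem_ball_zero_iff.1 hz.1
  refine ⟨‖z‖⁻¹ ^ m, one_le_pow₀ (one_le_inv₀ hz0 |>.2 hz1.le), fun p => ?_⟩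
  set d := p.totalDegree
  have hmax : ‖z ^ (m * d) * evalP p (z, φ z)‖ ≤ gammaSup φ p := by
    refine norm_le_of_eqOn_ball_diff_center (h := fun w => w ^ (m * d) * evalP p (w, φ w))
      (G := fun w => ∑ s ∈ p.support,
        MvPolynomial.coeff s p * w ^ (s 0 + m * (d - s 1)) * g w ^ s 1)
      ?_ ?_ ?_ ?_ hz
    · exact (continuous_pow _).continuousOn.mul
        ((continuous_evalP p).comp_continuousOn (continuousOn_id.prodMk hcont))
    · fun_prop
    · intro w hw
      simp only [hgφ w hw]
      exact pow_mul_evalP_eq_sum p le_rfl m w (φ w)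
    · intro ζ hζ
      rw [norm_mul, norm_pow, mem_sphere_zero_iff_norm.1 hζ, one_pow, one_mul]
      exact norm_evalP_le_gammaSup (hcont.mono subset_union_right) p hζ
  rw [norm_mul, norm_pow] at hmax
  calc ‖evalP p (z, φ z)‖
        = (‖z‖⁻¹ ^ m) ^ d * (‖z‖ ^ (m * d) * ‖evalP p (z, φ z)‖) := by
        rw [← pow_mul, inv_pow, inv_mul_cancel_left₀ (pow_pos hz0 _).ne']
    _ ≤ (‖z‖⁻¹ ^ m) ^ d * gammaSup φ p := by gcongr

/-- Wermer: if `φ` is continuous on `𝔻* ∪ 𝕋` and meromorphic in `𝔻`, then the graph `Σ` of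
`φ` over `𝔻*` lies in the projective hull of the graph `γ` of `φ` over `𝕋`. -/
theorem graph_in_projective_hull (φ : ℂ → ℂ)
    (hcont : ContinuousOn φ ((ball (0:ℂ) 1 \ {0}) ∪ sphere (0:ℂ) 1))
    (hol : DifferentiableOn ℂ φ (ball (0:ℂ) 1 \ {0}))
    (hmero : ∃ (m : ℕ) (g : ℂ → ℂ), DifferentiableOn ℂ g (ball (0:ℂ) 1) ∧
      ∀ z ∈ ball (0:ℂ) 1 \ {0}, g z = z ^ m * φ z) :
    ∀ z ∈ ball (0:ℂ) 1 \ {0}, ∃ C : ℝ, 1 ≤ C ∧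
      ∀ p : MvPolynomial (Fin 2) ℂ,
        ‖evalP p (z, φ z)‖ ≤ C ^ p.totalDegree * gammaSup φ p :=
  graph_in_projective_hull_general φ hcont hmero
end
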